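/- arXiv:2208.03856 — 13 statements merged into one kernel-verified Lean document; each statement's English description precedes it below -/
import Mathlib

section
/- Let x, y, s, t be integers such that x^2 + s^2 - s^4 = t^2 and y^2 + t^2 - t^4 = s^2. Then (x,y,s,t) = (±1, 0, 0, ±1), or (0, ±1, ±1, 0), or (±u^2, ±u^2, ±u, ±u) for some integer u. -/
/-!
Put `a = s²`, `b = t²`; the equations read `x² = a² - (a - b)` and `y² = b² - (b - a)`.
If `a = b` they give `x² = y² = s² = t²`, the family `(±u², ±u², ±u, ±u)`.
If `a < b`, then `y²` lies strictly below the square `b²` but only `b - a` below it, whereas the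
next smaller square is `2b - 1` below; hence `a + b ≤ 1`, i.e. `a = 0`, `b = 1`.
The case `a > b` is the same with `(x, s)` and `(y, t)` exchanged.
-/

lemma Int.sq_le_sub_one_sq_of_sq_lt {a b : ℤ} (hb : 0 ≤ b) (h : a ^ 2 < b ^ 2) :
    a ^ 2 ≤ (b - 1) ^ 2 := by
  have hab : |a| ≤ b - 1 := Int.le_sub_one_of_lt (abs_lt_of_sq_lt_sq h hb)
  simpa only [sq_abs] using pow_le_pow_left₀ (abs_nonneg a) hab 2

lemma eq_zero_and_eq_one_of_sq_eq_sq_sub {a b y : ℤ} (ha : 0 ≤ a) (hab : a < b)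
    (hy : y ^ 2 = b ^ 2 - (b - a)) : a = 0 ∧ b = 1 := by
  have hy_le : y ^ 2 ≤ (b - 1) ^ 2 := Int.sq_le_sub_one_sq_of_sq_lt (by omega) (by omega)
  have hsum : a + b ≤ 1 := by nlinarith
  omega

lemma solution_eq_of_sq_lt_sq {x y s t : ℤ} (h1 : x ^ 2 + s ^ 2 - s ^ 4 = t ^ 2)
    (h2 : y ^ 2 + t ^ 2 - t ^ 4 = s ^ 2) (hst : s ^ 2 < t ^ 2) :
    (x = 1 ∨ x = -1) ∧ y = 0 ∧ s = 0 ∧ (t = 1 ∨ t = -1) := by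
  obtain ⟨hs, ht⟩ : s ^ 2 = 0 ∧ t ^ 2 = 1 :=
    eq_zero_and_eq_one_of_sq_eq_sq_sub (y := y) (sq_nonneg s) hst (by linear_combination h2)
  have hx : x ^ 2 = 1 := by linear_combination h1 + ht - hs + s ^ 2 * hs
  have hy : y ^ 2 = 0 := by linear_combination h2 + t ^ 2 * ht + hs
  exact ⟨sq_eq_one_iff.mp hx, pow_eq_zero_iff two_ne_zero |>.mp hy,
    pow_eq_zero_iff two_ne_zero |>.mp hs, sq_eq_one_iff.mp ht⟩

theorem stmt_0 (x y s t : ℤ)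
    (h1 : x^2 + s^2 - s^4 = t^2) (h2 : y^2 + t^2 - t^4 = s^2) :
    ((x = 1 ∨ x = -1) ∧ y = 0 ∧ s = 0 ∧ (t = 1 ∨ t = -1)) ∨
    (x = 0 ∧ (y = 1 ∨ y = -1) ∧ (s = 1 ∨ s = -1) ∧ t = 0) ∨
    (∃ u : ℤ, (x = u^2 ∨ x = -u^2) ∧ (y = u^2 ∨ y = -u^2) ∧
      (s = u ∨ s = -u) ∧ (t = u ∨ t = -u)) := by
  rcases lt_trichotomy (s ^ 2) (t ^ 2) with hst | hst | hst
  · exact Or.inl (solution_eq_of_sq_lt_sq h1 h2 hst)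
  · refine Or.inr (Or.inr ⟨s, ?_, ?_, Or.inl rfl, sq_eq_sq_iff_eq_or_eq_neg.mp hst.symm⟩)
    · exact sq_eq_sq_iff_eq_or_eq_neg.mp (by linear_combination h1 - hst)
    · exact sq_eq_sq_iff_eq_or_eq_neg.mp (by linear_combination h2 + hst - (s ^ 2 + t ^ 2) * hst)
  · obtain ⟨hy, hx, ht, hs⟩ := solution_eq_of_sq_lt_sq h2 h1 hst
    exact Or.inr (Or.inl ⟨hx, hy, hs, ht⟩)
end

section
/- Let x, y, s, t be integers such that x^2 + s^2 - s^4 = t^2 and y^2 + t^2 - t^4 = -s^2. Then (x,y,s,t) = (±1, 0, 0, ±1) or (0,0,0,0). -/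
/-!
Put `a = s²` and `b = t²`, so that `x² = a² - a + b` and `y² = b² - b - a`. Since no square lies
strictly between two consecutive squares, `y² < b²` forces `y² ≤ (b - 1)²`, i.e. `b ≤ a + 1`.
If `a > 0` this pins `x²` between `(a - 1)²` and `(a + 1)²`, so `x² = a²` and `b = a`; then
`y² = a² - 2a` pins `a = 2`, which is not a square. Hence `s = 0`, and then `t² ≤ 1`.
-/

namespace Int

lemma sq_le_sub_one_sq_of_sq_lt_s1 {y n : ℤ} (hn : 0 ≤ n) (h : y ^ 2 < n ^ 2) :
    y ^ 2 ≤ (n - 1) ^ 2 := by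
  have hy : |y| ≤ n - 1 := by have := abs_lt_of_sq_lt_sq h hn; omega
  rw [← sq_abs]
  exact pow_le_pow_left₀ (abs_nonneg y) hy 2

lemma sq_ne_two (s : ℤ) : s ^ 2 ≠ 2 := by
  intro hs
  have := sq_le_sub_one_sq_of_sq_lt_s1 (n := 2) (y := s) (by norm_num) (by omega)
  omega

lemma le_add_one_of_sq_eq {a b y : ℤ} (ha : 0 ≤ a) (hy : y ^ 2 = b ^ 2 - b - a) :
    b ≤ a + 1 := by
  by_contra! hb
  have := sq_le_sub_one_sq_of_sq_lt_s1 (n := b) (y := y) (by omega) (by nlinarith)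
  nlinarith

lemma eq_two_of_sq_eq {a b x y : ℤ} (ha : 0 < a) (hb : 0 ≤ b)
    (hx : x ^ 2 = a ^ 2 - a + b) (hy : y ^ 2 = b ^ 2 - b - a) : a = 2 := by
  have hba : b ≤ a + 1 := le_add_one_of_sq_eq ha.le hy
  have hb1 : 1 ≤ b := by
    by_contra! hb0
    nlinarith [sq_nonneg y]
  have hx_le : x ^ 2 ≤ a ^ 2 := by
    have := sq_le_sub_one_sq_of_sq_lt_s1 (n := a + 1) (y := x) (by omega) (by nlinarith)
    simpa using this
  have hx_ge : a ^ 2 ≤ x ^ 2 := by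
    by_contra! hlt
    have := sq_le_sub_one_sq_of_sq_lt_s1 ha.le hlt
    nlinarith
  obtain rfl : a = b := by nlinarith
  have hy_le : y ^ 2 ≤ (a - 2) ^ 2 := by
    have := sq_le_sub_one_sq_of_sq_lt_s1 (n := a - 1) (y := y) (by omega) (by nlinarith)
    linear_combination this
  nlinarith [sq_nonneg y]

end Int

theorem stmt_1 (x y s t : ℤ)
    (h1 : x^2 + s^2 - s^4 = t^2) (h2 : y^2 + t^2 - t^4 = -s^2) :
    ((x = 1 ∨ x = -1) ∧ y = 0 ∧ s = 0 ∧ (t = 1 ∨ t = -1)) ∨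
    (x = 0 ∧ y = 0 ∧ s = 0 ∧ t = 0) := by
  have hx : x ^ 2 = (s ^ 2) ^ 2 - s ^ 2 + t ^ 2 := by linear_combination h1
  have hy : y ^ 2 = (t ^ 2) ^ 2 - t ^ 2 - s ^ 2 := by linear_combination h2
  obtain rfl : s = 0 := by
    by_contra hs
    exact Int.sq_ne_two s (Int.eq_two_of_sq_eq (by positivity) (sq_nonneg t) hx hy)
  have ht : t ^ 2 ≤ 1 := by simpa using Int.le_add_one_of_sq_eq le_rfl hy
  obtain ⟨ht_lo, ht_hi⟩ := abs_le.mp ((sq_le_one_iff_abs_le_one t).mp ht)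
  have hxt : x = t ∨ x = -t := sq_eq_sq_iff_eq_or_eq_neg.mp (by simpa using hx)
  interval_cases t <;> simp_all
end

section
/- Let x, y, s, t be integers such that x^2 + s^2 - s^4 = t^2 and y^2 + t^2 - t^4 = 1 - s^2. Then (x,y,s,t) = (±1, ±1, 0, ±1), or (0, 0, ±1, 0), or (±u^2, ±(u^2-1), ±u, ±u) for some integer u. -/
/-!
Put `a = s²` and `b = t²`. The equations say `x² = a² - (a - b)` and
`y² = b² - (b - (1 - a))`, and also `x² = (a - 1)² + (a + b - 1)`, `y² = (b - 1)² + (b - a)`.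
If `a ≠ b`, one of the two squares is squeezed strictly between consecutive squares unless
`a + b ≤ 1`, which leaves only `(a, b) = (0, 1)` or `(1, 0)`. If `a = b`, then
`x² = a²` and `y² = (a - 1)²`, which is the family with `u = s`.
-/

theorem Int.not_sq_lt_sq_lt_add_one_sq (n z : ℤ) (hlow : n ^ 2 < z ^ 2) (hup : z ^ 2 < (n + 1) ^ 2) :
    False := by
  rw [sq_lt_sq] at hlow
  have hz : (|n| + 1) ^ 2 ≤ z ^ 2 := by
    rw [← sq_abs z]
    exact pow_le_pow_left₀ (by positivity) (by omega) 2
  have hn : (n + 1) ^ 2 ≤ (|n| + 1) ^ 2 := by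
    rw [sq_le_sq, abs_of_nonneg (by positivity : 0 ≤ |n| + 1)]
    exact (abs_add_le n 1).trans (by simp)
  omega

theorem Int.sq_ne_sq_sub_self_add (x A B : ℤ) (hBA : B < A) (hAB : 1 < A + B) :
    x ^ 2 ≠ A ^ 2 - A + B := by
  intro hx
  exact Int.not_sq_lt_sq_lt_add_one_sq (A - 1) x (by nlinarith) (by nlinarith)

theorem Int.eq_or_of_sq_eq_sq_sub_self_add (x y a b : ℤ) (ha : 0 ≤ a) (hb : 0 ≤ b)
    (hx : x ^ 2 = a ^ 2 - a + b) (hy : y ^ 2 = b ^ 2 - b + (1 - a)) :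
    a = b ∨ (a = 0 ∧ b = 1) ∨ (a = 1 ∧ b = 0) := by
  rcases lt_trichotomy a b with hab | hab | hab
  · have : ¬ 1 < a + b := fun h => Int.sq_ne_sq_sub_self_add y b (1 - a) (by omega) (by omega) hy
    omega
  · exact Or.inl hab
  · have : ¬ 1 < a + b := fun h => Int.sq_ne_sq_sub_self_add x a b hab h hx
    omega

theorem stmt_2 (x y s t : ℤ)
    (h1 : x^2 + s^2 - s^4 = t^2) (h2 : y^2 + t^2 - t^4 = 1 - s^2) :
    ((x = 1 ∨ x = -1) ∧ (y = 1 ∨ y = -1) ∧ s = 0 ∧ (t = 1 ∨ t = -1)) ∨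
    (x = 0 ∧ y = 0 ∧ (s = 1 ∨ s = -1) ∧ t = 0) ∨
    (∃ u : ℤ, (x = u^2 ∨ x = -u^2) ∧ (y = u^2 - 1 ∨ y = -(u^2 - 1)) ∧
      (s = u ∨ s = -u) ∧ (t = u ∨ t = -u)) := by
  have hx : x ^ 2 = (s ^ 2) ^ 2 - s ^ 2 + t ^ 2 := by linear_combination h1
  have hy : y ^ 2 = (t ^ 2) ^ 2 - t ^ 2 + (1 - s ^ 2) := by linear_combination h2
  rcases Int.eq_or_of_sq_eq_sq_sub_self_add x y _ _ (sq_nonneg s) (sq_nonneg t) hx hy with hst | ⟨hs, ht⟩ | ⟨hs, ht⟩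
  · refine Or.inr (Or.inr ⟨s, ?_, ?_, Or.inl rfl, ?_⟩)
    · exact eq_or_eq_neg_of_sq_eq_sq _ _ (by rw [hx, hst]; ring)
    · exact eq_or_eq_neg_of_sq_eq_sq _ _ (by rw [hy, ← hst]; ring)
    · exact (eq_or_eq_neg_of_sq_eq_sq _ _ hst.symm)
  · rw [hs, ht] at hx hy
    exact Or.inl ⟨sq_eq_one_iff.1 (by simpa using hx), sq_eq_one_iff.1 (by simpa using hy),
      pow_eq_zero_iff two_ne_zero |>.1 hs, sq_eq_one_iff.1 ht⟩
  · rw [hs, ht] at hx hy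
    exact Or.inr (Or.inl ⟨by simpa using hx, by simpa using hy, sq_eq_one_iff.1 hs,
      pow_eq_zero_iff two_ne_zero |>.1 ht⟩)
end

section
/- Let x, y, s, t be integers such that x^2 + s^2 - s^4 = -t^2 and y^2 + t^2 - t^4 = -s^2. Then x = y = s = t = 0. -/
/-!
Put `a = s²`, `b = t²` and, by symmetry, assume `b ≤ a`. If `s ≠ 0`, the first equation
`x² = a² - a - b` squeezes `x²` into `[a² - 2a, a² - a]`, which contains only the square
`(a - 1)²`; hence `b = a - 1`. The second equation then reads `y² + 2 = (a - 2)²`, which is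
impossible modulo 4. So `s = 0`, and the equations force everything else to vanish.
-/

theorem Int.sq_add_two_ne_sq (y c : ℤ) : y ^ 2 + 2 ≠ c ^ 2 := by
  intro h
  have h4 : ∀ u v : ZMod 4, u ^ 2 + 2 ≠ v ^ 2 := by decide
  exact h4 y c (by exact_mod_cast congrArg (fun n : ℤ => (n : ZMod 4)) h)

theorem Int.sq_eq_sq_sub_one_of_sq_le {x s t : ℤ} (h : x ^ 2 + s ^ 2 - s ^ 4 = -t ^ 2)
    (hts : t ^ 2 ≤ s ^ 2) (hs : s ≠ 0) : t ^ 2 = s ^ 2 - 1 := by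
  rcases (Int.one_le_abs hs).eq_or_lt with hs1 | hs2
  · have ha : s ^ 2 = 1 := by rw [← sq_abs, ← hs1]; norm_num
    nlinarith [sq_nonneg x, sq_nonneg t]
  · have ha : 4 ≤ s ^ 2 := by nlinarith [sq_abs s]
    have hupper : |x| < s ^ 2 := abs_lt_of_sq_lt_sq (by nlinarith [sq_nonneg t]) (by positivity)
    have hlower : s ^ 2 - 2 < |x| :=
      (le_abs_self _).trans_lt (sq_lt_sq.mp (by nlinarith))
    have hx : |x| = s ^ 2 - 1 := by omega
    nlinarith [sq_abs x]

theorem Int.eq_zero_of_sq_le {x y s t : ℤ}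
    (h1 : x ^ 2 + s ^ 2 - s ^ 4 = -t ^ 2) (h2 : y ^ 2 + t ^ 2 - t ^ 4 = -s ^ 2)
    (hts : t ^ 2 ≤ s ^ 2) : s = 0 := by
  by_contra hs
  have ht := Int.sq_eq_sq_sub_one_of_sq_le h1 hts hs
  exact Int.sq_add_two_ne_sq y (s ^ 2 - 2) (by linear_combination h2 + (t ^ 2 + s ^ 2 - 2) * ht)

theorem stmt_3 (x y s t : ℤ)
    (h1 : x^2 + s^2 - s^4 = -t^2) (h2 : y^2 + t^2 - t^4 = -s^2) :
    x = 0 ∧ y = 0 ∧ s = 0 ∧ t = 0 := by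
  rcases le_total (t ^ 2) (s ^ 2) with hts | hst
  · obtain rfl := Int.eq_zero_of_sq_le h1 h2 hts
    obtain rfl : t = 0 := by nlinarith [sq_nonneg x, sq_nonneg t]
    exact ⟨by nlinarith, by nlinarith, rfl, rfl⟩
  · obtain rfl := Int.eq_zero_of_sq_le h2 h1 hst
    obtain rfl : s = 0 := by nlinarith [sq_nonneg y, sq_nonneg s]
    exact ⟨by nlinarith, by nlinarith, rfl, rfl⟩
end

section
/- Let x, y, s, t be integers such that x^2 + s^2 - s^4 = -t^2 and y^2 + t^2 - t^4 = 1 - s^2. Then (x,y,s,t) = (0, ±1, 0, 0) or (0, 0, ±1, 0). -/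
/-!
Write `a = s²`, `b = t²`, so that `x² = a² - a - b` and `y² = b² - b + 1 - a`. If `s` and `t` are
both nonzero then `a, b ≥ 1`, whence `x² < a²` and `y² < b²`; being squares, `x² ≤ (a - 1)²` and
`y² ≤ (b - 1)²`, which force `b ≤ a ≤ b + 1`. Either way one of the two equations becomes
`x² + 1 = (a - 1)²` or `y² + 1 = (b - 1)²`, and two squares differing by one are `0` and `1`,
giving `a = 2` or `b = 2`, which is not a square. So `s = 0` or `t = 0`, and both cases are immediate.
-/

lemma Int.sq_le_sub_one_sq_of_sq_lt_sq {x m : ℤ} (hm : 0 ≤ m) (h : x ^ 2 < m ^ 2) :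
    x ^ 2 ≤ (m - 1) ^ 2 := by
  have hx : |x| < m := abs_lt_of_sq_lt_sq h hm
  simpa only [sq_abs] using pow_le_pow_left₀ (abs_nonneg x) (Int.le_sub_one_of_lt hx) 2

lemma Int.eq_zero_and_sq_eq_one_of_sq_add_one_eq_sq {x m : ℤ} (h : x ^ 2 + 1 = m ^ 2) : x = 0 ∧ m ^ 2 = 1 := by
  have hle : x ^ 2 ≤ (|m| - 1) ^ 2 :=
    Int.sq_le_sub_one_sq_of_sq_lt_sq (abs_nonneg m) (by rw [sq_abs]; omega)
  have hm : |m| ≤ 1 := by nlinarith [sq_abs m]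
  have hm2 : m ^ 2 ≤ 1 := by nlinarith [sq_abs m, abs_nonneg m]
  have hx : x ^ 2 = 0 := by nlinarith [sq_nonneg x]
  exact ⟨pow_eq_zero_iff two_ne_zero |>.mp hx, by omega⟩

lemma Int.sq_ne_two_s4 (s : ℤ) : s ^ 2 ≠ 2 := fun h =>
  Int.sq_ne_two_mod_four s (by rw [← sq, h]; rfl)

lemma eq_two_or_eq_two_of_sq_eq {x y a b : ℤ} (ha : 0 < a) (hb : 0 < b)
    (hx : x ^ 2 = a ^ 2 - a - b) (hy : y ^ 2 = b ^ 2 - b + 1 - a) : a = 2 ∨ b = 2 := by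
  have hxa : x ^ 2 ≤ (a - 1) ^ 2 := Int.sq_le_sub_one_sq_of_sq_lt_sq (by omega) (by linarith)
  have hyb : y ^ 2 ≤ (b - 1) ^ 2 := Int.sq_le_sub_one_sq_of_sq_lt_sq (by omega) (by linarith)
  have hab : a = b ∨ a = b + 1 := by
    rw [hx] at hxa
    rw [hy] at hyb
    have : a ≤ b + 1 := by linarith
    have : b ≤ a := by linarith
    omega
  rcases hab with rfl | rfl
  · obtain ⟨-, h⟩ := Int.eq_zero_and_sq_eq_one_of_sq_add_one_eq_sq (x := x) (m := a - 1) (by rw [hx]; ring)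
    left; nlinarith
  · obtain ⟨-, h⟩ := Int.eq_zero_and_sq_eq_one_of_sq_add_one_eq_sq (x := y) (m := b - 1) (by rw [hy]; ring)
    right; nlinarith

theorem stmt_4 (x y s t : ℤ)
    (h1 : x^2 + s^2 - s^4 = -t^2) (h2 : y^2 + t^2 - t^4 = 1 - s^2) :
    (x = 0 ∧ (y = 1 ∨ y = -1) ∧ s = 0 ∧ t = 0) ∨
    (x = 0 ∧ y = 0 ∧ (s = 1 ∨ s = -1) ∧ t = 0) := by
  have hst : s = 0 ∨ t = 0 := by
    by_contra! hst
    have ha : 0 < s ^ 2 := pow_two_pos_of_ne_zero hst.1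
    have hb : 0 < t ^ 2 := pow_two_pos_of_ne_zero hst.2
    rcases eq_two_or_eq_two_of_sq_eq (x := x) (y := y) ha hb (by linarith) (by linarith) with h | h
    exacts [Int.sq_ne_two_s4 s h, Int.sq_ne_two_s4 t h]
  obtain rfl | hs := eq_or_ne s 0
  · have ht : t = 0 := by nlinarith [sq_nonneg x]
    have hx : x = 0 := by nlinarith [sq_nonneg t]
    subst ht hx
    exact .inl ⟨rfl, sq_eq_one_iff.mp (by linarith), rfl, rfl⟩
  · have ht : t = 0 := hst.resolve_left hs
    subst ht
    have hs1 : s ^ 2 = 1 := by nlinarith [sq_nonneg y, pow_two_pos_of_ne_zero hs]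
    have hy : y = 0 := by nlinarith
    have hx : x = 0 := by nlinarith
    exact .inr ⟨hx, hy, sq_eq_one_iff.mp hs1, rfl⟩
end

section
/- Let x, y, s, t be integers such that x^2 + s^2 - s^4 = 1 - t^2 and y^2 + t^2 - t^4 = 1 - s^2. Then (x,y,s,t) = (0, ±1, 0, ±1), or (±1, 0, ±1, 0), or (±(u^2-1), ±(u^2-1), ±u, ±u) for some integer u. -/
/-!
The system is symmetric under `(x, y, s, t) ↦ (y, x, t, s)`, and subtracting the equations shows
`x² - (s² - 1)² = s² - t²`. If `0 < t² < s²`, then `x²` would lie strictly between the consecutive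
squares `(s² - 1)²` and `(s²)²`; so `s² < t²` forces `s = 0` and `s² > t²` forces `t = 0`, which
pins down the first two families, while `s² = t²` gives `x² = y² = (s² - 1)²`.
-/

theorem Int.not_sq_lt_sq_lt_succ_sq (x n : ℤ) : ¬(n ^ 2 < x ^ 2 ∧ x ^ 2 < (n + 1) ^ 2) := by
  rintro ⟨hl, hr⟩
  rw [sq_lt_sq] at hl hr
  have := abs_add_le n 1
  simp only [abs_one] at this
  omega

theorem eq_zero_of_sq_eq_of_sq_lt_sq {x a b : ℤ} (h : x ^ 2 = a ^ 4 - a ^ 2 - b ^ 2 + 1)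
    (hba : b ^ 2 < a ^ 2) : b = 0 := by
  by_contra hb
  have hb_pos : 0 < b ^ 2 := by positivity
  refine Int.not_sq_lt_sq_lt_succ_sq x (a ^ 2 - 1) ⟨?_, ?_⟩ <;> nlinarith

namespace QuarticPair

variable {x y s t : ℤ} (h1 : x ^ 2 + s ^ 2 - s ^ 4 = 1 - t ^ 2)
  (h2 : y ^ 2 + t ^ 2 - t ^ 4 = 1 - s ^ 2)
include h1 h2

theorem eq_of_sq_lt_sq (hts : t ^ 2 < s ^ 2) :
    (x = 1 ∨ x = -1) ∧ y = 0 ∧ (s = 1 ∨ s = -1) ∧ t = 0 := by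
  obtain rfl : t = 0 := eq_zero_of_sq_eq_of_sq_lt_sq (x := x) (by linarith) hts
  have hs : s ^ 2 = 1 := by nlinarith [sq_nonneg y]
  have hy : y ^ 2 = 0 := by nlinarith
  have hx : x ^ 2 = 1 := by nlinarith
  exact ⟨sq_eq_one_iff.mp hx, pow_eq_zero_iff two_ne_zero |>.mp hy, sq_eq_one_iff.mp hs, rfl⟩

theorem exists_of_sq_eq_sq (hst : s ^ 2 = t ^ 2) :
    ∃ u : ℤ, (x = u ^ 2 - 1 ∨ x = -(u ^ 2 - 1)) ∧ (y = u ^ 2 - 1 ∨ y = -(u ^ 2 - 1)) ∧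
      (s = u ∨ s = -u) ∧ (t = u ∨ t = -u) := by
  refine ⟨s, sq_eq_sq_iff_eq_or_eq_neg.mp ?_, sq_eq_sq_iff_eq_or_eq_neg.mp ?_, .inl rfl,
    sq_eq_sq_iff_eq_or_eq_neg.mp hst.symm⟩ <;> nlinarith

end QuarticPair

theorem stmt_6 (x y s t : ℤ)
    (h1 : x^2 + s^2 - s^4 = 1 - t^2) (h2 : y^2 + t^2 - t^4 = 1 - s^2) :
    (x = 0 ∧ (y = 1 ∨ y = -1) ∧ s = 0 ∧ (t = 1 ∨ t = -1)) ∨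
    ((x = 1 ∨ x = -1) ∧ y = 0 ∧ (s = 1 ∨ s = -1) ∧ t = 0) ∨
    (∃ u : ℤ, (x = u^2 - 1 ∨ x = -(u^2 - 1)) ∧ (y = u^2 - 1 ∨ y = -(u^2 - 1)) ∧
      (s = u ∨ s = -u) ∧ (t = u ∨ t = -u)) := by
  rcases lt_trichotomy (s ^ 2) (t ^ 2) with hst | hst | hst
  · obtain ⟨hy, hx, ht, hs⟩ := QuarticPair.eq_of_sq_lt_sq h2 h1 hst
    exact .inl ⟨hx, hy, hs, ht⟩
  · exact .inr <| .inr <| QuarticPair.exists_of_sq_eq_sq h1 h2 hst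
  · exact .inr <| .inl <| QuarticPair.eq_of_sq_lt_sq h1 h2 hst
end

section
/- Let x, y, s, t be integers such that x^2 + s^2 - s^4 = 1 - t^2 and y^2 + t^2 - t^4 = s^2 - 1. Then (x,y,s,t) = (0, 0, ±1, ±1) or (±1, 0, ±1, 0). -/
/-! Put `a = s²`, `b = t²`. The equations say `x² = (a - 1)² + (a - b)` and
`y² = (b - 1)² + (a + b - 2)`. A square exceeding `(c - 1)²` with `c ≥ 1`
is at least `c²`; applied to `y` this rules out `a < b` (the cases `b = 1, 2` being immediate),
applied to `x` it forces `a = 1, b = 0` when `b < a`.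
When `a = b` the second equation becomes `y² = t⁴ - 1`, whose only solutions have `t² = 1`. -/

lemma Int.add_one_sq_le_sq_of_sq_lt {k m : ℤ} (hk : 0 ≤ k) (h : k ^ 2 < m ^ 2) :
    (k + 1) ^ 2 ≤ m ^ 2 := by
  have hkm : k < |m| := by simpa [abs_of_nonneg hk] using sq_lt_sq.mp h
  calc (k + 1) ^ 2 ≤ |m| ^ 2 := pow_le_pow_left₀ (by omega) (by omega) 2
    _ = m ^ 2 := sq_abs m

lemma Int.sq_eq_one_and_eq_zero_of_sq_eq_pow_four_sub_one {t y : ℤ} (h : y ^ 2 = t ^ 4 - 1) :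
    t ^ 2 = 1 ∧ y = 0 := by
  have hfac : (t ^ 2 - y) * (t ^ 2 + y) = 1 := by linear_combination -h
  rcases Int.eq_one_or_neg_one_of_mul_eq_one' hfac with ⟨hm, hp⟩ | ⟨hm, hp⟩
  · omega
  · nlinarith [sq_nonneg t]

variable {x y s t : ℤ}

lemma sq_le_sq_of_sq_add_sq_sub_pow_four_eq (h : y ^ 2 + t ^ 2 - t ^ 4 = s ^ 2 - 1) :
    t ^ 2 ≤ s ^ 2 := by
  by_contra! hlt
  have hs : 0 ≤ s ^ 2 := sq_nonneg s
  rcases (show 1 ≤ t ^ 2 by omega).eq_or_lt with ht | ht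
  · nlinarith [sq_nonneg y]
  · have ht4 : 4 ≤ t ^ 2 := by
      simpa using Int.add_one_sq_le_sq_of_sq_lt zero_le_one (by simpa using ht)
    have hy := Int.add_one_sq_le_sq_of_sq_lt (k := t ^ 2 - 1) (m := y) (by omega) (by nlinarith)
    nlinarith

lemma sq_eq_one_and_eq_zero_of_sq_add_sq_sub_pow_four_eq
    (h : x ^ 2 + s ^ 2 - s ^ 4 = 1 - t ^ 2) (hlt : t ^ 2 < s ^ 2) :
    s ^ 2 = 1 ∧ t = 0 := by
  have ht : 0 ≤ t ^ 2 := sq_nonneg t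
  have hx := Int.add_one_sq_le_sq_of_sq_lt (k := s ^ 2 - 1) (m := x) (by omega) (by nlinarith)
  have hs : s ^ 2 = 1 := by nlinarith
  exact ⟨hs, sq_eq_zero_iff.mp (by omega)⟩

theorem stmt_7 (x y s t : ℤ)
    (h1 : x^2 + s^2 - s^4 = 1 - t^2) (h2 : y^2 + t^2 - t^4 = s^2 - 1) :
    (x = 0 ∧ y = 0 ∧ (s = 1 ∨ s = -1) ∧ (t = 1 ∨ t = -1)) ∨
    ((x = 1 ∨ x = -1) ∧ y = 0 ∧ (s = 1 ∨ s = -1) ∧ t = 0) := by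
  rcases (sq_le_sq_of_sq_add_sq_sub_pow_four_eq h2).lt_or_eq with hlt | heq
  · obtain ⟨hs, rfl⟩ := sq_eq_one_and_eq_zero_of_sq_add_sq_sub_pow_four_eq h1 hlt
    have hx : x ^ 2 = 1 := by nlinarith
    have hy : y ^ 2 = 0 := by nlinarith
    exact Or.inr ⟨sq_eq_one_iff.mp hx, sq_eq_zero_iff.mp hy, sq_eq_one_iff.mp hs, rfl⟩
  · obtain ⟨ht, rfl⟩ :=
      Int.sq_eq_one_and_eq_zero_of_sq_eq_pow_four_sub_one (show y ^ 2 = t ^ 4 - 1 by nlinarith)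
    have hx : x ^ 2 = 0 := by nlinarith
    exact Or.inl ⟨sq_eq_zero_iff.mp hx, rfl, sq_eq_one_iff.mp (heq ▸ ht), sq_eq_one_iff.mp ht⟩
end

section
/- Let x, y, s, t be integers such that x^2 + s^2 - s^4 = t^2 and y^2 - 1 - t^2 - t^4 = -s^2. Then (x,y,s,t) = (0, 0, ±1, 0) or (0, ±1, 0, 0). -/
/-!
Both equations place a square strictly between two consecutive squares unless the solution is
tiny: if `s² ≤ t²` and `t ≠ 0` then `(t²)² < y² < (t² + 1)²`, and if `t² < s²` and `s² + t² ≥ 2`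
then `(s² - 1)² < x² < (s²)²`. What remains is `t = 0`, `s² ≤ 1`, which is checked directly.
-/

lemma Int.sq_ne_sq_add {m c y : ℤ} (hm : 0 ≤ m) (hc₀ : 0 < c) (hc : c ≤ 2 * m) :
    y ^ 2 ≠ m ^ 2 + c := by
  intro hy
  have hlo : |m| < |y| := sq_lt_sq.mp (by linarith)
  have hhi : |y| < |m + 1| := sq_lt_sq.mp (by linarith)
  rw [abs_of_nonneg hm] at hlo
  rw [abs_of_nonneg (by linarith : 0 ≤ m + 1)] at hhi
  omega

theorem stmt_10 (x y s t : ℤ)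
    (h1 : x^2 + s^2 - s^4 = t^2) (h2 : y^2 - 1 - t^2 - t^4 = -s^2) :
    (x = 0 ∧ y = 0 ∧ (s = 1 ∨ s = -1) ∧ t = 0) ∨
    (x = 0 ∧ (y = 1 ∨ y = -1) ∧ s = 0 ∧ t = 0) := by
  have hs₀ : 0 ≤ s ^ 2 := sq_nonneg s
  have ht₀ : 0 ≤ t ^ 2 := sq_nonneg t
  have small : t = 0 ∧ s ^ 2 ≤ 1 := by
    rcases le_or_gt (s ^ 2) (t ^ 2) with hst | hst
    · have ht : t = 0 := by
        by_contra ht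
        have := pow_two_pos_of_ne_zero ht
        exact Int.sq_ne_sq_add (y := y) (m := t ^ 2) (c := t ^ 2 - s ^ 2 + 1) ht₀ (by linarith)
          (by omega) (by linear_combination h2)
      subst ht
      exact ⟨rfl, by linarith⟩
    · have hst₁ : s ^ 2 + t ^ 2 ≤ 1 := by
        by_contra! hbig
        exact Int.sq_ne_sq_add (y := x) (m := s ^ 2 - 1) (c := s ^ 2 + t ^ 2 - 1) (by omega)
          (by omega) (by omega) (by linear_combination h1)
      exact ⟨pow_eq_zero_iff two_ne_zero |>.mp (by omega), by omega⟩
  obtain ⟨rfl, hs₁⟩ := small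
  have hx : x = 0 := by nlinarith
  rcases (by omega : s ^ 2 = 0 ∨ s ^ 2 = 1) with hs | hs
  · exact Or.inr ⟨hx, sq_eq_one_iff.mp (by linarith), pow_eq_zero_iff two_ne_zero |>.mp hs, rfl⟩
  · exact Or.inl ⟨hx, pow_eq_zero_iff two_ne_zero |>.mp (by linarith), sq_eq_one_iff.mp hs, rfl⟩
end

section
/- Let x, y, s, t be integers such that x^2 + s^2 - s^4 = 1 + t^2 and y^2 - 1 - t^2 - t^4 = s^2. Then (x,y,s,t) = (±1, ±1, 0, 0). -/
/-!
Both equations pin a square between consecutive squares. From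
`y² = (t²)² + t² + 1 + s²` we get `t² ≤ s²`, and from `x² = (s²)² - s² + t² + 1` we get
`s² ≤ t² + 1`. In either remaining case one of `x, y` satisfies `a² = s⁴ + 1`, whose only
integer solutions have `s = 0`.
-/

lemma Int.not_sq_between {a c : ℤ} (hlo : a ^ 2 < c ^ 2) (hhi : c ^ 2 < (a + 1) ^ 2) : False := by
  have h₁ : |a| < |c| := sq_lt_sq.mp hlo
  have h₂ : |c| < |a + 1| := sq_lt_sq.mp hhi
  have h₃ : |a + 1| ≤ |a| + 1 := by simpa using abs_add_le a 1
  omega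

lemma Int.eq_zero_of_sq_eq_pow_four_add_one {a s : ℤ} (h : a ^ 2 = s ^ 4 + 1) : s = 0 := by
  by_contra hs
  have hs2 : 0 < s ^ 2 := by positivity
  exact Int.not_sq_between (a := s ^ 2) (c := a) (by nlinarith) (by nlinarith)

theorem stmt_11 (x y s t : ℤ)
    (h1 : x^2 + s^2 - s^4 = 1 + t^2) (h2 : y^2 - 1 - t^2 - t^4 = s^2) :
    (x = 1 ∨ x = -1) ∧ (y = 1 ∨ y = -1) ∧ s = 0 ∧ t = 0 := by
  have ht_le_s : t ^ 2 ≤ s ^ 2 := by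
    by_contra! hlt
    exact Int.not_sq_between (a := t ^ 2) (c := y) (by nlinarith [sq_nonneg s]) (by nlinarith)
  have hs_le_t : s ^ 2 ≤ t ^ 2 + 1 := by
    by_contra! hlt
    exact Int.not_sq_between (a := s ^ 2 - 1) (c := x) (by nlinarith [sq_nonneg t]) (by nlinarith)
  have hs : s = 0 := by
    obtain heq | heq : s ^ 2 = t ^ 2 ∨ s ^ 2 = t ^ 2 + 1 := by omega
    · exact Int.eq_zero_of_sq_eq_pow_four_add_one (a := x) (by nlinarith)
    · exact Int.eq_zero_of_sq_eq_pow_four_add_one (a := y) (by nlinarith)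
  subst hs
  have ht : t = 0 := by simpa using ht_le_s
  subst ht
  refine ⟨sq_eq_one_iff.mp ?_, sq_eq_one_iff.mp ?_, rfl, rfl⟩ <;> linarith
end

section
/- Let x, y, s, t be integers such that x^2 - 1 - s^2 - s^4 = t^2 and y^2 - 1 - t^2 - t^4 = s^2. Then (x,y,s,t) = (±(u^2+1), ±(u^2+1), ±u, ±u) for some integer u. -/
/-! From the first equation `x² = (s² + 1)² + (t² - s²)`. Since `x²` exceeds `s⁴`, it is at least
the next square `(s² + 1)²`, so `s² ≤ t²`; symmetrically `t² ≤ s²`. Hence `s² = t²`, and then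
`x² = y² = (s² + 1)²`. -/

lemma Int.add_one_sq_le_sq_of_sq_lt_s13 {n a : ℤ} (hn : 0 ≤ n) (h : n ^ 2 < a ^ 2) :
    (n + 1) ^ 2 ≤ a ^ 2 := by
  have hlt : n < |a| := by simpa [abs_of_nonneg hn] using sq_lt_sq.mp h
  calc (n + 1) ^ 2 ≤ |a| ^ 2 := pow_le_pow_left₀ (by omega) (by omega) 2
    _ = a ^ 2 := sq_abs a

lemma sq_le_sq_of_sub_one_sub_sq_sub_pow_four_eq {x s t : ℤ}
    (h : x ^ 2 - 1 - s ^ 2 - s ^ 4 = t ^ 2) : s ^ 2 ≤ t ^ 2 := by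
  have hlt : (s ^ 2) ^ 2 < x ^ 2 := by nlinarith [sq_nonneg s, sq_nonneg t]
  have hle := Int.add_one_sq_le_sq_of_sq_lt_s13 (sq_nonneg s) hlt
  nlinarith

theorem stmt_13 (x y s t : ℤ)
    (h1 : x^2 - 1 - s^2 - s^4 = t^2) (h2 : y^2 - 1 - t^2 - t^4 = s^2) :
    ∃ u : ℤ, (x = u^2 + 1 ∨ x = -(u^2 + 1)) ∧ (y = u^2 + 1 ∨ y = -(u^2 + 1)) ∧
      (s = u ∨ s = -u) ∧ (t = u ∨ t = -u) := by
  have hts : t ^ 2 = s ^ 2 :=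
    le_antisymm (sq_le_sq_of_sub_one_sub_sq_sub_pow_four_eq h2)
      (sq_le_sq_of_sub_one_sub_sq_sub_pow_four_eq h1)
  have hx : x ^ 2 = (s ^ 2 + 1) ^ 2 := by linear_combination h1 + hts
  have hy : y ^ 2 = (s ^ 2 + 1) ^ 2 := by linear_combination h2 + (t ^ 2 + s ^ 2 + 1) * hts
  exact ⟨s, sq_eq_sq_iff_eq_or_eq_neg.mp hx, sq_eq_sq_iff_eq_or_eq_neg.mp hy, Or.inl rfl,
    sq_eq_sq_iff_eq_or_eq_neg.mp hts⟩
end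

section
/- Let x, y, s, t be integers such that x^2 - 1 - s^2 - s^4 = -t^2 - 1 and y^2 - 1 - t^2 - t^4 = -(s^2 + 1). Then (x,y,s,t) = (±u^2, ±u^2, ±u, ±u) for some integer u. -/
/-!
From the two equations, `x ^ 2 = s ^ 4 + (s ^ 2 - t ^ 2)` and `y ^ 2 = t ^ 4 + (t ^ 2 - s ^ 2)`.
If `s ^ 2 < t ^ 2`, the second puts `y ^ 2` strictly between the consecutive squares `(t ^ 2) ^ 2`
and `(t ^ 2 + 1) ^ 2`; symmetrically for `t ^ 2 < s ^ 2`. Hence `s ^ 2 = t ^ 2`, after which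
`x ^ 2 = y ^ 2 = (s ^ 2) ^ 2`, so `u = s` works.
-/

lemma Int.not_sq_between_sq_succ {a x : ℤ} (ha : 0 ≤ a) (hl : a ^ 2 < x ^ 2)
    (hr : x ^ 2 < (a + 1) ^ 2) : False := by
  rw [sq_lt_sq, abs_of_nonneg ha] at hl
  rw [sq_lt_sq, abs_of_nonneg (by omega : 0 ≤ a + 1)] at hr
  omega

lemma sq_le_sq_of_sq_eq_pow_four_add_sub {y s t : ℤ} (h : y ^ 2 = t ^ 4 + t ^ 2 - s ^ 2) :
    t ^ 2 ≤ s ^ 2 := by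
  by_contra! hlt
  refine Int.not_sq_between_sq_succ (sq_nonneg t) (x := y) ?_ ?_ <;>
    nlinarith [sq_nonneg s]

theorem stmt_17 (x y s t : ℤ)
    (h1 : x^2 - 1 - s^2 - s^4 = -t^2 - 1) (h2 : y^2 - 1 - t^2 - t^4 = -(s^2 + 1)) :
    ∃ u : ℤ, (x = u^2 ∨ x = -u^2) ∧ (y = u^2 ∨ y = -u^2) ∧
      (s = u ∨ s = -u) ∧ (t = u ∨ t = -u) := by
  have hst : s ^ 2 = t ^ 2 :=
    le_antisymm (sq_le_sq_of_sq_eq_pow_four_add_sub (y := x) (by linarith))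
      (sq_le_sq_of_sq_eq_pow_four_add_sub (y := y) (by linarith))
  refine ⟨s, sq_eq_sq_iff_eq_or_eq_neg.1 ?_, sq_eq_sq_iff_eq_or_eq_neg.1 ?_, .inl rfl,
    sq_eq_sq_iff_eq_or_eq_neg.1 hst.symm⟩
  · linear_combination h1 + hst
  · linear_combination h2 - (1 + s ^ 2 + t ^ 2) * hst
end

section
/- Let φ(x) = x^2 + c with c = s^2 - s^4 for some integer s. Then the set of rational preperiodic points of φ is exactly {s^2, -s^2, 1-s^2, -(1-s^2)}, i.e., the rational numbers P such that some iterate φ^n(P) is periodic under φ are precisely ±s^2 and ±(1-s^2). -/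
private lemma den_add_int (q : ℚ) (n : ℤ) : (q + (n:ℚ)).den = q.den := by
  have hd : (0:ℤ) < (q.den:ℤ) := by exact_mod_cast q.pos
  have hco : IsCoprime (q.num) (q.den:ℤ) :=
    Int.isCoprime_iff_gcd_eq_one.mpr q.reduced
  have hco2 : IsCoprime (q.num + n * (q.den:ℤ)) (q.den:ℤ) := hco.add_mul_right_left n
  have hco3 : Nat.Coprime (q.num + n * (q.den:ℤ)).natAbs ((q.den:ℤ)).natAbs :=
    Int.isCoprime_iff_gcd_eq_one.mp hco2
  have h : q + (n:ℚ) = ((q.num + n * (q.den:ℤ) : ℤ) : ℚ) / ((q.den : ℤ) : ℚ) := by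
    push_cast
    rw [eq_div_iff (by exact_mod_cast q.den_ne_zero), add_mul]
    congr 1
    exact_mod_cast (Rat.num_div_den q) ▸ (div_mul_cancel₀ (q.num:ℚ) (by exact_mod_cast q.den_ne_zero))
  have := Rat.den_div_eq_of_coprime hd hco3
  rw [h]
  exact_mod_cast this

private lemma den_phi (c : ℤ) (q : ℚ) : (q^2 + (c:ℚ)).den = q.den ^ 2 := by
  rw [sq, den_add_int, Rat.mul_self_den, ← sq]

private def fI (s : ℤ) (x : ℤ) : ℤ := x^2 + (s^2 - s^4)

private lemma hu_cases (s : ℤ) : s^2 = 0 ∨ s^2 = 1 ∨ 4 ≤ s^2 := by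
  rcases le_or_gt s (-2) with h | h
  · right; right; nlinarith
  rcases le_or_gt 2 s with h2 | h2
  · right; right; nlinarith
  · interval_cases s <;> norm_num

private lemma arith_periodic (u M Q : ℤ) (hu : u = 0 ∨ u = 1 ∨ 4 ≤ u)
    (hM0 : 0 ≤ M) (hM : M^2 ≤ M + u^2 - u) (hQ : |Q| ≤ M) (hfQ : |Q^2 + u - u^2| ≤ M) :
    Q = u ∨ Q = -u ∨ Q = 1 - u ∨ Q = u - 1 := by
  rw [abs_le] at hQ hfQ
  rcases hu with rfl | rfl | hu
  · have hM1 : M ≤ 1 := by nlinarith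
    have hQ2 : Q^2 ≤ 1 := by linarith [hfQ.2]
    have : -1 ≤ Q ∧ Q ≤ 1 := ⟨by nlinarith, by nlinarith⟩
    omega
  · have hM1 : M ≤ 1 := by nlinarith
    have : -1 ≤ Q ∧ Q ≤ 1 := by omega
    omega
  · have hMu : M ≤ u := by nlinarith [sq_nonneg (M - u), sq_nonneg (M - u - 1)]
    have h1 : u^2 - 2*u ≤ Q^2 := by linarith [hfQ.1]
    have h2 : Q^2 ≤ u^2 := by linarith [hfQ.2]
    have h3 : Q ≤ u ∧ -u ≤ Q := by omega
    have h4 : Q ≥ u - 1 ∨ Q ≤ 1 - u := by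
      by_contra hc
      push_neg at hc
      nlinarith [mul_nonneg (by omega : (0:ℤ) ≤ u-2-Q) (by omega : (0:ℤ) ≤ u-2+Q)]
    omega

private lemma arith_pre (u x : ℤ) (hu : u = 0 ∨ u = 1 ∨ 4 ≤ u)
    (h : x^2 + u - u^2 = u ∨ x^2 + u - u^2 = -u ∨ x^2 + u - u^2 = 1 - u ∨
      x^2 + u - u^2 = u - 1) :
    x = u ∨ x = -u ∨ x = 1 - u ∨ x = u - 1 := by
  rcases h with h | h | h | h
  · have h0 : (x - u) * (x + u) = 0 := by linear_combination h
    rcases mul_eq_zero.mp h0 with h1 | h1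
    · left; omega
    · right; left; omega
  · have hx2 : x^2 = u^2 - 2*u := by linarith
    rcases hu with rfl | rfl | hu
    · have : x = 0 := by nlinarith [sq_nonneg x]
      left; omega
    · exfalso; nlinarith [sq_nonneg x]
    · exfalso
      have ha1 : |x| ≤ u - 2 ∨ u - 1 ≤ |x| := by omega
      rcases ha1 with ha | ha
      · nlinarith [sq_abs x, abs_nonneg x, mul_self_le_mul_self (abs_nonneg x) ha]
      · nlinarith [sq_abs x, mul_self_le_mul_self (by linarith : (0:ℤ) ≤ u-1) ha]
  · have h0 : (x - (u-1)) * (x + (u-1)) = 0 := by linear_combination h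
    rcases mul_eq_zero.mp h0 with h1 | h1
    · right; right; right; omega
    · right; right; left; omega
  · have hx2 : x^2 = u^2 - 1 := by linarith
    rcases hu with rfl | rfl | hu
    · exfalso; nlinarith [sq_nonneg x]
    · have : x = 0 := by nlinarith [sq_nonneg x]
      right; right; left; omega
    · exfalso
      have ha1 : |x| ≤ u - 1 ∨ u ≤ |x| := by omega
      rcases ha1 with ha | ha
      · nlinarith [sq_abs x, abs_nonneg x, mul_self_le_mul_self (abs_nonneg x) ha]
      · nlinarith [sq_abs x, mul_self_le_mul_self (by linarith : (0:ℤ) ≤ u) ha]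

private lemma periodic_mem (s : ℤ) (Q : ℤ) (n : ℕ) (hn : 1 ≤ n)
    (h : (fI s)^[n] Q = Q) :
    Q = s^2 ∨ Q = -s^2 ∨ Q = 1 - s^2 ∨ Q = s^2 - 1 := by
  have hper : Function.IsPeriodicPt (fI s) n Q := h
  have hn0 : 0 < n := hn
  obtain ⟨k₀, hk₀, hmax⟩ := Finset.exists_max_image (Finset.range n)
    (fun k => |(fI s)^[k] Q|) ⟨0, Finset.mem_range.mpr hn0⟩
  set M := |(fI s)^[k₀] Q| with hMdef
  have hle : ∀ j, |(fI s)^[j] Q| ≤ M := by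
    intro j
    have := hmax (j % n) (Finset.mem_range.mpr (Nat.mod_lt _ hn0))
    simpa [hper.iterate_mod_apply j] using this
  have hM0 : 0 ≤ M := abs_nonneg _
  set y := (fI s)^[k₀] Q with hydef
  have hy : |fI s y| ≤ M := by
    have := hle (k₀+1)
    rwa [Function.iterate_succ_apply'] at this
  have hMy : M^2 = y^2 := by rw [hMdef, sq_abs]
  have hMsq : M^2 ≤ M + (s^2)^2 - s^2 := by
    have h2 := (abs_le.mp hy).2
    have h3 : fI s y = y^2 + (s^2 - s^4) := rfl
    rw [h3] at h2
    nlinarith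
  have hQle : |Q| ≤ M := by simpa using hle 0
  have hfQ : |Q^2 + s^2 - (s^2)^2| ≤ M := by
    have h1 := hle 1
    rw [Function.iterate_one] at h1
    have e : Q^2 + s^2 - (s^2)^2 = fI s Q := by unfold fI; ring
    rwa [e]
  exact arith_periodic (s^2) M Q (hu_cases s) hM0 hMsq hQle hfQ

private lemma chain (s : ℤ) : ∀ (m : ℕ) (x : ℤ),
    ((fI s)^[m] x = s^2 ∨ (fI s)^[m] x = -s^2 ∨ (fI s)^[m] x = 1 - s^2 ∨
      (fI s)^[m] x = s^2 - 1) →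
    (x = s^2 ∨ x = -s^2 ∨ x = 1 - s^2 ∨ x = s^2 - 1) := by
  intro m
  induction m with
  | zero => intro x h; simpa using h
  | succ k ih =>
    intro x h
    rw [Function.iterate_succ_apply] at h
    have h2 := ih (fI s x) h
    have e : fI s x = x^2 + s^2 - (s^2)^2 := by unfold fI; ring
    rw [e] at h2
    exact arith_pre (s^2) x (hu_cases s) h2

theorem stmt_18 (s : ℤ) (φ : ℚ → ℚ)
    (hφ : ∀ x : ℚ, φ x = x^2 + ((s : ℚ)^2 - (s : ℚ)^4)) :
    {P : ℚ | ∃ m n : ℕ, 1 ≤ n ∧ φ^[n] (φ^[m] P) = φ^[m] P} =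
      {(s : ℚ)^2, -(s : ℚ)^2, 1 - (s : ℚ)^2, -(1 - (s : ℚ)^2)} := by
  have hφ' : ∀ x : ℚ, φ x = x^2 + ((s^2 - s^4 : ℤ) : ℚ) := by
    intro x; rw [hφ]; push_cast; ring
  have hcast : ∀ x : ℤ, φ ((x:ℚ)) = ((fI s x : ℤ) : ℚ) := by
    intro x; rw [hφ']; unfold fI; push_cast; ring
  have hiter : ∀ (k : ℕ) (x : ℤ), φ^[k] ((x:ℚ)) = (((fI s)^[k] x : ℤ) : ℚ) := by
    intro k
    induction k with
    | zero => intro x; simp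
    | succ j ih =>
      intro x
      rw [Function.iterate_succ_apply, Function.iterate_succ_apply, hcast, ih]
  have hden : ∀ (k : ℕ) (q : ℚ), (φ^[k] q).den = q.den ^ (2^k) := by
    intro k
    induction k with
    | zero => intro q; simp
    | succ j ih =>
      intro q
      rw [Function.iterate_succ_apply', hφ', den_phi, ih, ← pow_mul, ← pow_succ]
  ext P
  simp only [Set.mem_setOf_eq, Set.mem_insert_iff, Set.mem_singleton_iff]
  constructor
  · rintro ⟨m, n, hn, hper⟩
    have hd : P.den = 1 := by
      have h1 := congrArg Rat.den hper
      rw [hden n (φ^[m] P), hden m P, ← pow_mul] at h1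
      by_cases hD : P.den ≤ 1
      · have := P.pos; omega
      · exfalso
        have h2 := Nat.pow_right_injective (by omega : 2 ≤ P.den) h1
        have h3 : 0 < 2^m := Nat.pow_pos (by norm_num)
        have h4 : (2:ℕ)^n = 1 := by
          have : 2^m * 2^n = 2^m * 1 := by omega
          exact Nat.eq_of_mul_eq_mul_left h3 this
        have h5 : 1 < (2:ℕ)^n := Nat.one_lt_two_pow (by omega)
        omega
    have hP : ((P.num : ℤ) : ℚ) = P := Rat.coe_int_num_of_den_eq_one hd
    set p := P.num with hp
    have hip : φ^[m] P = (((fI s)^[m] p : ℤ) : ℚ) := by rw [← hP]; exact hiter m p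
    have hZ : (fI s)^[n] ((fI s)^[m] p) = (fI s)^[m] p := by
      have : ((((fI s)^[n] ((fI s)^[m] p)) : ℤ) : ℚ) = (((fI s)^[m] p : ℤ) : ℚ) := by
        rw [← hiter n _, ← hip]; exact hper
      exact_mod_cast this
    have hQ4 := periodic_mem s ((fI s)^[m] p) n hn hZ
    have hp4 := chain s m p hQ4
    rcases hp4 with h | h | h | h
    · left; rw [← hP, h]; push_cast; ring
    · right; left; rw [← hP, h]; push_cast; ring
    · right; right; left; rw [← hP, h]; push_cast; ring
    · right; right; right; rw [← hP, h]; push_cast; ring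
  · rintro (rfl | rfl | rfl | rfl)
    · exact ⟨0, 1, le_refl 1, by
        simp only [Function.iterate_zero, id_eq, Function.iterate_one, hφ]; ring⟩
    · exact ⟨1, 1, le_refl 1, by
        simp only [Function.iterate_one, hφ]; ring⟩
    · exact ⟨0, 1, le_refl 1, by
        simp only [Function.iterate_zero, id_eq, Function.iterate_one, hφ]; ring⟩
    · exact ⟨1, 1, le_refl 1, by
        simp only [Function.iterate_one, hφ]; ring⟩
end

section
/- Let φ(x) = x^2 + c with c = -1 - s^2 - s^4 for some nonzero integer s. Then the set of rational preperiodic points of φ is exactly {s^2, -s^2, 1+s^2, -(1+s^2)}; in particular s^2 and -(1+s^2) form a 2-cycle, φ(-s^2) = -(1+s^2), φ(1+s^2) = s^2, and no other rational point maps into this set under φ. -/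
/-!
Write `a = s²`, so that `c = -(a² + a + 1)` and the four points are `±a`, `±(1 + a)`.
Since `c ∈ ℤ`, the map squares denominators, so a rational periodic point `y` is an integer.
Where `|x| ≥ a + 2` the map increases `|x|` by at least `1`, so `|y|` and `|y² + c|` are
both `< a + 2`, which leaves `|y| ∈ {a, a + 1}`. Conversely the preimage of the four points
consists of themselves and `±√(a² + 1)`, `±√(a² + 2a + 2)`, which are irrational because
these integers lie strictly between consecutive squares; so every preperiodic point, being a
backward iterate of a periodic one, is among the four.
-/

open Function Set

def quadMap {R : Type*} [Semiring R] (c : R) (x : R) : R := x ^ 2 + c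

section Escape

variable {R : Type*} [CommRing R] [LinearOrder R] [IsStrictOrderedRing R] {c r x : R}

theorem abs_add_one_le_abs_quadMap (hr : 1 ≤ r) (hrc : 1 ≤ r ^ 2 - r + c) (hx : r ≤ |x|) :
    |x| + 1 ≤ |quadMap c x| := by
  have hsq : x ^ 2 = |x| ^ 2 := (sq_abs x).symm
  calc |x| + 1 ≤ x ^ 2 + c := by nlinarith
    _ ≤ |quadMap c x| := le_abs_self _

theorem abs_add_le_abs_iterate_quadMap (hr : 1 ≤ r) (hrc : 1 ≤ r ^ 2 - r + c) (hx : r ≤ |x|)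
    (k : ℕ) : |x| + k ≤ |(quadMap c)^[k] x| := by
  induction k with
  | zero => simp
  | succ k ih =>
    have hk : r ≤ |(quadMap c)^[k] x| := by linarith [(Nat.cast_nonneg k : (0 : R) ≤ k)]
    rw [iterate_succ_apply']
    push_cast
    linarith [abs_add_one_le_abs_quadMap hr hrc hk]

theorem abs_lt_of_isPeriodicPt_quadMap (hr : 1 ≤ r) (hrc : 1 ≤ r ^ 2 - r + c) {n : ℕ}
    (hn : 0 < n) (h : IsPeriodicPt (quadMap c) n x) : |x| < r := by
  by_contra! hx
  have hgrow := abs_add_le_abs_iterate_quadMap hr hrc hx n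
  rw [h.eq] at hgrow
  have hn' : (1 : R) ≤ n := by exact_mod_cast hn
  linarith

end Escape

theorem Rat.den_quadMap_intCast (c : ℤ) (q : ℚ) : (quadMap (c : ℚ) q).den = q.den ^ 2 := by
  rw [quadMap, Rat.add_intCast_den, Rat.den_pow]

theorem Rat.den_iterate_quadMap_intCast (c : ℤ) (q : ℚ) (k : ℕ) :
    ((quadMap (c : ℚ))^[k] q).den = q.den ^ 2 ^ k := by
  induction k with
  | zero => simp
  | succ k ih => rw [iterate_succ_apply', den_quadMap_intCast, ih, ← pow_mul, pow_succ]

theorem Rat.den_eq_one_of_isPeriodicPt_quadMap {c : ℤ} {q : ℚ} {n : ℕ} (hn : 0 < n)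
    (h : IsPeriodicPt (quadMap (c : ℚ)) n q) : q.den = 1 := by
  have hpow : q.den ^ 2 ^ n = q.den := by rw [← den_iterate_quadMap_intCast c q n, h.eq]
  by_contra hq
  have htwo : 2 ^ n = 1 := (Nat.pow_eq_self_iff (by have := q.pos; omega)).mp hpow
  exact (Nat.one_lt_two_pow hn.ne').ne' htwo

theorem Int.not_isSquare_of_lt_of_lt {m n : ℤ} (hl : m ^ 2 < n) (hr : n < (m + 1) ^ 2) :
    ¬IsSquare n := by
  rintro ⟨t, rfl⟩
  rw [← sq, sq_lt_sq] at hl hr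
  have := abs_add_le m 1
  rw [abs_one] at this
  omega

def cycleAndPreimages (a : ℚ) : Set ℚ := {a, -a, 1 + a, -(1 + a)}

section CycleFamily

variable {a : ℤ}

theorem mem_cycleAndPreimages_of_quadMap_mem (ha : 1 ≤ a) {P : ℚ}
    (h : quadMap (-(a ^ 2 + a + 1) : ℚ) P ∈ cycleAndPreimages a) :
    P ∈ cycleAndPreimages a := by
  have not_sq {m n : ℤ} (hl : m ^ 2 < n) (hr : n < (m + 1) ^ 2) (hP : P ^ 2 = n) : False :=
    Int.not_isSquare_of_lt_of_lt hl hr (Rat.isSquare_intCast_iff.mp ⟨P, by rw [← hP, sq]⟩)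
  simp only [quadMap, cycleAndPreimages, mem_insert_iff, mem_singleton_iff] at h ⊢
  rcases h with h | h | h | h
  · have hsq : P ^ 2 = (1 + a) ^ 2 := by linear_combination h
    rcases sq_eq_sq_iff_eq_or_eq_neg.mp hsq with h' | h' <;> simp [h']
  · exact (not_sq (m := a) (n := a ^ 2 + 1) (by nlinarith) (by nlinarith)
      (by push_cast; linear_combination h)).elim
  · exact (not_sq (m := a + 1) (n := a ^ 2 + 2 * a + 2) (by nlinarith) (by nlinarith)
      (by push_cast; linear_combination h)).elim
  · have hsq : P ^ 2 = (a : ℚ) ^ 2 := by linear_combination h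
    rcases sq_eq_sq_iff_eq_or_eq_neg.mp hsq with h' | h' <;> simp [h']

theorem mem_cycleAndPreimages_of_isPeriodicPt (ha : 1 ≤ a) {n : ℕ} (hn : 0 < n) {y : ℚ}
    (hy : IsPeriodicPt (quadMap (-(a ^ 2 + a + 1) : ℚ)) n y) :
    y ∈ cycleAndPreimages a := by
  have hr : (1 : ℚ) ≤ a + 2 := by exact_mod_cast (by omega : (1 : ℤ) ≤ a + 2)
  have hrc : 1 ≤ ((a : ℚ) + 2) ^ 2 - (a + 2) + -(a ^ 2 + a + 1) := by
    nlinarith [(by exact_mod_cast ha : (1 : ℚ) ≤ a)]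
  have hy_lt := abs_lt_of_isPeriodicPt_quadMap hr hrc hn hy
  have hfy_lt := abs_lt_of_isPeriodicPt_quadMap hr hrc hn hy.apply
  have hc : (-(a ^ 2 + a + 1) : ℚ) = ((-(a ^ 2 + a + 1) : ℤ) : ℚ) := by push_cast; ring
  rw [hc] at hy
  obtain ⟨k, rfl⟩ : ∃ k : ℤ, y = k :=
    ⟨y.num, (Rat.coe_int_num_of_den_eq_one (Rat.den_eq_one_of_isPeriodicPt_quadMap hn hy)).symm⟩
  have hk : |k| < a + 2 := by exact_mod_cast hy_lt
  have hfk : |k ^ 2 - (a ^ 2 + a + 1)| < a + 2 := by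
    have hfk_cast :
        quadMap (-(a ^ 2 + a + 1) : ℚ) k = ((k ^ 2 - (a ^ 2 + a + 1) : ℤ) : ℚ) := by
      rw [quadMap]; push_cast; ring
    rw [hfk_cast] at hfy_lt
    exact_mod_cast hfy_lt
  have hk_ge : a ≤ |k| := by
    by_contra! hlt
    nlinarith [abs_lt.mp hfk, sq_abs k, abs_nonneg k]
  simp only [cycleAndPreimages, mem_insert_iff, mem_singleton_iff]
  norm_cast
  rcases abs_choice k with h | h <;> omega

theorem isPeriodicPt_two_quadMap_of_mem_cycleAndPreimages {P : ℚ}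
    (hP : P ∈ cycleAndPreimages a) :
    IsPeriodicPt (quadMap (-(a ^ 2 + a + 1) : ℚ)) 2 (quadMap (-(a ^ 2 + a + 1) : ℚ) P) := by
  simp only [cycleAndPreimages, mem_insert_iff, mem_singleton_iff] at hP
  rcases hP with rfl | rfl | rfl | rfl <;>
    simp only [IsPeriodicPt, IsFixedPt, iterate_succ_apply', iterate_zero_apply, quadMap] <;> ring

theorem exists_isPeriodicPt_iterate_quadMap_iff (ha : 1 ≤ a) (P : ℚ) :
    (∃ m n : ℕ, 0 < n ∧
        IsPeriodicPt (quadMap (-(a ^ 2 + a + 1) : ℚ)) n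
          ((quadMap (-(a ^ 2 + a + 1) : ℚ))^[m] P)) ↔
      P ∈ cycleAndPreimages a := by
  constructor
  · rintro ⟨m, n, hn, hper⟩
    have hback : MapsTo (quadMap (-(a ^ 2 + a + 1) : ℚ)) (cycleAndPreimages a)ᶜ
        (cycleAndPreimages a)ᶜ := fun x hx hfx => hx (mem_cycleAndPreimages_of_quadMap_mem ha hfx)
    by_contra hP
    exact hback.iterate m hP (mem_cycleAndPreimages_of_isPeriodicPt ha hn hper)
  · exact fun hP => ⟨1, 2, two_pos, isPeriodicPt_two_quadMap_of_mem_cycleAndPreimages hP⟩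

end CycleFamily

theorem stmt_19 (s : ℤ) (hs : s ≠ 0) (φ : ℚ → ℚ)
    (hφ : ∀ x : ℚ, φ x = x^2 + (-1 - (s : ℚ)^2 - (s : ℚ)^4)) :
    {P : ℚ | ∃ m n : ℕ, 1 ≤ n ∧ φ^[n] (φ^[m] P) = φ^[m] P} =
      {(s : ℚ)^2, -(s : ℚ)^2, 1 + (s : ℚ)^2, -(1 + (s : ℚ)^2)} ∧
    φ ((s : ℚ)^2) = -(1 + (s : ℚ)^2) ∧
    φ (-(1 + (s : ℚ)^2)) = (s : ℚ)^2 ∧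
    φ (-(s : ℚ)^2) = -(1 + (s : ℚ)^2) ∧
    φ (1 + (s : ℚ)^2) = (s : ℚ)^2 ∧
    ∀ P : ℚ, φ P ∈ ({(s : ℚ)^2, -(s : ℚ)^2, 1 + (s : ℚ)^2, -(1 + (s : ℚ)^2)} : Set ℚ) →
      P ∈ ({(s : ℚ)^2, -(s : ℚ)^2, 1 + (s : ℚ)^2, -(1 + (s : ℚ)^2)} : Set ℚ) := by
  set a : ℤ := s ^ 2 with ha_def
  have ha : 1 ≤ a := by have := sq_pos_of_ne_zero hs; omega
  have hsa : (s : ℚ) ^ 2 = a := by rw [ha_def]; push_cast; rfl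
  obtain rfl : φ = quadMap (-(a ^ 2 + a + 1) : ℚ) :=
    funext fun x => by rw [hφ, quadMap, ← hsa]; ring
  rw [hsa]
  refine ⟨ext fun P => exists_isPeriodicPt_iterate_quadMap_iff ha P, ?_, ?_, ?_, ?_,
    fun P => mem_cycleAndPreimages_of_quadMap_mem ha⟩ <;> rw [quadMap] <;> ring
end
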